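/- arXiv:1509.02095 — 5 statements merged into one kernel-verified Lean document; each statement's English description precedes it below -/
import Mathlib

section
/- Let Ω ⊂ ℝⁿ be a bounded measurable set, D > 0, t > 0, and define u(x,t) = ∫_Ω (4πDt)^{-n/2} exp(−‖x−y‖²/(4Dt)) dy and N(t) = ∫_{ℝⁿ∖Ω} u(x,t) dx. Let μ̄(ℓ) = vol({ x ∈ Ω : infDist(x, frontier Ω) ≤ ℓ }) be the volume of the closed interior Minkowski sausage of ∂Ω of width ℓ. Then N(t) ≤ ∫_{ℝⁿ} π^{-n/2} e^{−‖v‖²} μ̄(2√(Dt)·‖v‖) dv (the de Gennes-type upper bound: the heat content is controlled by Gaussian averages of interior Minkowski sausage volumes). -/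
open MeasureTheory Set
open scoped ENNReal

/-!
Substituting `x = z + y`, Tonelli and translation invariance write the heat content as
`∫ K(z) · vol {y ∈ Ω | z + y ∉ Ω} dz`, where `K` is the heat kernel. A point `y ∈ Ω` with
`z + y ∉ Ω` lies within `‖z‖` of `∂Ω`, so that volume is at most `μ̄(‖z‖)`; the rescaling
`z = 2√(Dt) v` turns `K` into the normalized Gaussian `π^{-n/2} e^{-‖v‖²}`.
-/

theorem Metric.infDist_frontier_le_infDist_compl {E : Type*} [NormedAddCommGroup E]
    [NormedSpace ℝ E] [FiniteDimensional ℝ E] {s : Set E} {x : E} (hx : x ∈ s) :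
    infDist x (frontier s) ≤ infDist x sᶜ := by
  rcases eq_or_ne s univ with rfl | hs
  · simp
  obtain ⟨y, hy, hxy⟩ := exists_mem_frontier_infDist_compl_eq_dist hx hs
  exact hxy ▸ infDist_le_dist_of_mem hy

def interiorSausage {α : Type*} [PseudoMetricSpace α] (s : Set α) (ℓ : ℝ) : Set α :=
  {x ∈ s | Metric.infDist x (frontier s) ≤ ℓ}

section interiorSausage

variable {α : Type*} [PseudoMetricSpace α] (s : Set α)

theorem interiorSausage_subset (ℓ : ℝ) : interiorSausage s ℓ ⊆ s := sep_subset _ _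

theorem monotone_interiorSausage : Monotone (interiorSausage s) :=
  fun _ _ h _ hx => ⟨hx.1, hx.2.trans h⟩

theorem monotone_measure_interiorSausage [MeasurableSpace α] (μ : Measure α) :
    Monotone fun ℓ => μ (interiorSausage s ℓ) :=
  fun _ _ h => measure_mono (monotone_interiorSausage s h)

end interiorSausage

theorem inter_preimage_add_compl_subset_interiorSausage {E : Type*} [NormedAddCommGroup E]
    [NormedSpace ℝ E] [FiniteDimensional ℝ E] (s : Set E) (z : E) :
    s ∩ (z + ·) ⁻¹' sᶜ ⊆ interiorSausage s ‖z‖ := fun y ⟨hy, hzy⟩ =>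
  ⟨hy, calc Metric.infDist y (frontier s) ≤ Metric.infDist y sᶜ :=
          Metric.infDist_frontier_le_infDist_compl hy
      _ ≤ dist y (z + y) := Metric.infDist_le_dist_of_mem hzy
      _ = ‖z‖ := by rw [dist_comm, dist_add_self_left]⟩

theorem lintegral_lintegral_sub_eq_lintegral_mul_measure_inter
    {G : Type*} [MeasurableSpace G] [AddGroup G] [MeasurableAdd₂ G] [MeasurableSub₂ G]
    (μ : Measure G) [SFinite μ] [μ.IsAddRightInvariant] {f : G → ℝ≥0∞} (hf : Measurable f)
    {s t : Set G} (ht : MeasurableSet t) :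
    ∫⁻ x in t, ∫⁻ y in s, f (x - y) ∂μ ∂μ = ∫⁻ z, f z * μ (s ∩ (z + ·) ⁻¹' t) ∂μ := by
  have hinner (y : G) : ∫⁻ x in t, f (x - y) ∂μ = ∫⁻ z, t.indicator 1 (z + y) * f z ∂μ := by
    rw [← (measurePreserving_add_right μ y).setLIntegral_comp_preimage_emb
      (measurableEmbedding_addRight y),
      ← lintegral_indicator (ht.preimage (measurable_add_const y))]
    refine lintegral_congr fun z => ?_
    by_cases hz : z + y ∈ t <;> simp [hz]
  rw [lintegral_lintegral_swap (f := fun x y => f (x - y)) (hf.comp measurable_sub).aemeasurable]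
  simp_rw [hinner]
  rw [lintegral_lintegral_swap (f := fun y z => t.indicator 1 (z + y) * f z)
    (((measurable_one.indicator ht).comp (measurable_snd.add measurable_fst)).mul
      (hf.comp measurable_snd)).aemeasurable]
  refine lintegral_congr fun z => ?_
  have hpre : MeasurableSet ((z + ·) ⁻¹' t) := ht.preimage (measurable_const_add z)
  have hind (y : G) : t.indicator (1 : G → ℝ≥0∞) (z + y) = ((z + ·) ⁻¹' t).indicator 1 y := rfl
  simp_rw [hind]
  rw [lintegral_mul_const _ (measurable_one.indicator hpre), lintegral_indicator_one hpre,
    Measure.restrict_apply hpre, inter_comm, mul_comm]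

theorem lintegral_comp_smul {E : Type*} [NormedAddCommGroup E] [NormedSpace ℝ E]
    [MeasurableSpace E] [BorelSpace E] [FiniteDimensional ℝ E] (μ : Measure E)
    [μ.IsAddHaarMeasure] (f : E → ℝ≥0∞) {R : ℝ} (hR : R ≠ 0) :
    ∫⁻ x, f (R • x) ∂μ = ENNReal.ofReal |(R ^ Module.finrank ℝ E)⁻¹| * ∫⁻ x, f x ∂μ := by
  let e : E ≃ᵐ E := (Homeomorph.smul (Units.mk0 R hR)).toMeasurableEquiv
  calc ∫⁻ x, f (R • x) ∂μ = ∫⁻ x, f x ∂(μ.map e) := (lintegral_map_equiv f e).symm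
    _ = _ := by
      rw [show ⇑e = (R • ·) from rfl, Measure.map_addHaar_smul μ hR, lintegral_smul_measure,
        smul_eq_mul]

theorem ofReal_integral_le_lintegral_ofReal {α : Type*} [MeasurableSpace α] {μ : Measure α}
    {f : α → ℝ} (hf : 0 ≤ᵐ[μ] f) :
    ENNReal.ofReal (∫ x, f x ∂μ) ≤ ∫⁻ x, ENNReal.ofReal (f x) ∂μ :=
  calc ENNReal.ofReal (∫ x, f x ∂μ) ≤ ‖∫ x, f x ∂μ‖ₑ := Real.ofReal_le_enorm _
    _ ≤ ∫⁻ x, ‖f x‖ₑ ∂μ := enorm_integral_le_lintegral_enorm f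
    _ = ∫⁻ x, ENNReal.ofReal (f x) ∂μ :=
      lintegral_congr_ae (hf.mono fun _ hx => Real.enorm_eq_ofReal hx)

theorem integrable_exp_neg_sq_norm {V : Type*} [NormedAddCommGroup V] [InnerProductSpace ℝ V]
    [FiniteDimensional ℝ V] [MeasurableSpace V] [BorelSpace V] :
    Integrable (fun v : V => Real.exp (-‖v‖ ^ 2)) := by
  refine Integrable.of_integral_ne_zero ?_
  have hgauss := GaussianFourier.integral_rexp_neg_mul_sq_norm (V := V) one_pos
  simp only [neg_mul, one_mul, div_one] at hgauss
  rw [hgauss]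
  positivity

section gaussianAverage

variable {V : Type*} [NormedAddCommGroup V] [InnerProductSpace ℝ V] [FiniteDimensional ℝ V]
  [MeasurableSpace V] [BorelSpace V] {s : Set V}

theorem lintegral_gaussian_mul_measure_interiorSausage_ne_top (hs : volume s ≠ ∞) (c a : ℝ) :
    ∫⁻ v : V, ENNReal.ofReal (c * Real.exp (-‖v‖ ^ 2)) * volume (interiorSausage s (a * ‖v‖)) ≠
      ∞ := by
  refine ne_top_of_le_ne_top ?_ (lintegral_mono fun v =>
    mul_le_mul_right (measure_mono (interiorSausage_subset s _)) _)
  rw [lintegral_mul_const' _ _ hs]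
  exact ENNReal.mul_ne_top (integrable_exp_neg_sq_norm.const_mul c).lintegral_lt_top.ne hs

theorem integral_gaussian_mul_measure_interiorSausage_toReal (hs : volume s ≠ ∞) {c : ℝ}
    (hc : 0 ≤ c) (a : ℝ) :
    ∫ v : V, c * Real.exp (-‖v‖ ^ 2) * (volume (interiorSausage s (a * ‖v‖))).toReal =
      (∫⁻ v : V, ENNReal.ofReal (c * Real.exp (-‖v‖ ^ 2)) *
        volume (interiorSausage s (a * ‖v‖))).toReal := by
  have hsausage : Measurable fun v : V => volume (interiorSausage s (a * ‖v‖)) :=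
    (monotone_measure_interiorSausage s volume).measurable.comp
      (measurable_const.mul measurable_norm)
  rw [integral_eq_lintegral_of_nonneg_ae (ae_of_all _ fun v => by positivity)
    (by fun_prop : Measurable fun v : V =>
      c * Real.exp (-‖v‖ ^ 2) * (volume (interiorSausage s (a * ‖v‖))).toReal).aestronglyMeasurable]
  refine congrArg ENNReal.toReal (lintegral_congr fun v => ?_)
  rw [ENNReal.ofReal_mul (by positivity), ENNReal.ofReal_toReal
    (ne_top_of_le_ne_top hs (measure_mono (interiorSausage_subset s _)))]

end gaussianAverage

noncomputable def heatKernel {n : ℕ} (D t : ℝ) (z : EuclideanSpace ℝ (Fin n)) : ℝ :=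
  (4 * Real.pi * D * t) ^ (-(n : ℝ) / 2) * Real.exp (-‖z‖ ^ 2 / (4 * D * t))

section heatKernel

variable {n : ℕ} {D t : ℝ}

theorem heatKernel_nonneg (hDt : 0 < D * t) (z : EuclideanSpace ℝ (Fin n)) :
    0 ≤ heatKernel D t z := by
  have : 0 < 4 * Real.pi * D * t := by nlinarith [Real.pi_pos]
  unfold heatKernel
  positivity

theorem pow_mul_heatKernel_smul (hDt : 0 < D * t) (v : EuclideanSpace ℝ (Fin n)) :
    (2 * √(D * t)) ^ n * heatKernel D t ((2 * √(D * t)) • v) =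
      Real.pi ^ (-(n : ℝ) / 2) * Real.exp (-‖v‖ ^ 2) := by
  set a := 2 * √(D * t)
  have ha : 0 < a := by positivity
  have h4 : 0 < 4 * D * t := by linarith
  have ha2 : a ^ 2 = 4 * D * t := by
    rw [mul_pow, Real.sq_sqrt hDt.le]; ring
  have hpow : a ^ n = (4 * D * t) ^ ((n : ℝ) / 2) := by
    rw [← ha2, ← Real.rpow_natCast, ← Real.rpow_natCast, ← Real.rpow_mul ha.le]
    congr 1; push_cast; ring
  have hexp : -‖a • v‖ ^ 2 / (4 * D * t) = -‖v‖ ^ 2 := by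
    rw [norm_smul, Real.norm_of_nonneg ha.le, mul_pow, ha2, neg_div, mul_div_cancel_left₀ _ h4.ne']
  rw [heatKernel, hexp, ← mul_assoc, hpow, show 4 * Real.pi * D * t = 4 * D * t * Real.pi by ring,
    Real.mul_rpow h4.le Real.pi_pos.le, ← mul_assoc, ← Real.rpow_add h4, neg_div, add_neg_cancel,
    Real.rpow_zero, one_mul]

theorem lintegral_compl_lintegral_heatKernel_le {Ω : Set (EuclideanSpace ℝ (Fin n))}
    (hΩ : MeasurableSet Ω) (hDt : 0 < D * t) :
    ∫⁻ x in Ωᶜ, ∫⁻ y in Ω, ENNReal.ofReal (heatKernel D t (x - y)) ≤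
      ∫⁻ v : EuclideanSpace ℝ (Fin n),
        ENNReal.ofReal (Real.pi ^ (-(n : ℝ) / 2) * Real.exp (-‖v‖ ^ 2)) *
          volume (interiorSausage Ω (2 * √(D * t) * ‖v‖)) := by
  set a := 2 * √(D * t)
  have ha : 0 < a := by positivity
  have hK : Measurable fun z : EuclideanSpace ℝ (Fin n) => ENNReal.ofReal (heatKernel D t z) := by
    unfold heatKernel; fun_prop
  rw [lintegral_lintegral_sub_eq_lintegral_mul_measure_inter volume hK hΩ.compl]
  calc ∫⁻ z, ENNReal.ofReal (heatKernel D t z) * volume (Ω ∩ (z + ·) ⁻¹' Ωᶜ)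
      ≤ ∫⁻ z, ENNReal.ofReal (heatKernel D t z) * volume (interiorSausage Ω ‖z‖) := by
        gcongr with z
        exact inter_preimage_add_compl_subset_interiorSausage Ω z
    _ = ENNReal.ofReal (a ^ n) * ∫⁻ v, ENNReal.ofReal (heatKernel D t (a • v)) *
          volume (interiorSausage Ω ‖a • v‖) := by
        rw [lintegral_comp_smul volume (fun z => ENNReal.ofReal (heatKernel D t z) *
            volume (interiorSausage Ω ‖z‖)) ha.ne', finrank_euclideanSpace_fin, ← mul_assoc,
          ← ENNReal.ofReal_mul (by positivity), abs_of_pos (by positivity),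
          mul_inv_cancel₀ (by positivity), ENNReal.ofReal_one, one_mul]
    _ = _ := by
        rw [← lintegral_const_mul' _ _ ENNReal.ofReal_ne_top]
        refine lintegral_congr fun v => ?_
        rw [← mul_assoc, ← ENNReal.ofReal_mul (by positivity), pow_mul_heatKernel_smul hDt,
          norm_smul, Real.norm_of_nonneg ha.le]

end heatKernel

/-- De Gennes-type upper bound: the heat content `N(t)` of a bounded measurable `Ω ⊂ ℝⁿ`
is bounded by the Gaussian average of volumes of interior Minkowski sausages of `∂Ω`. -/
theorem heat_content_le_gaussian_average_of_sausages
    {n : ℕ} (Ω : Set (EuclideanSpace ℝ (Fin n)))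
    (hΩm : MeasurableSet Ω) (hΩb : Bornology.IsBounded Ω)
    (D t : ℝ) (hD : 0 < D) (ht : 0 < t) :
    (∫ x in Ωᶜ, ∫ y in Ω,
        (4 * Real.pi * D * t) ^ (-(n : ℝ) / 2) * Real.exp (-‖x - y‖ ^ 2 / (4 * D * t))) ≤
    ∫ v : EuclideanSpace ℝ (Fin n),
        Real.pi ^ (-(n : ℝ) / 2) * Real.exp (-‖v‖ ^ 2) *
          (volume {x ∈ Ω |
            Metric.infDist x (frontier Ω) ≤ 2 * Real.sqrt (D * t) * ‖v‖}).toReal := by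
  have hDt : 0 < D * t := mul_pos hD ht
  have hΩvol : volume Ω ≠ ∞ := hΩb.measure_lt_top.ne
  change (∫ x in Ωᶜ, ∫ y in Ω, heatKernel D t (x - y)) ≤ ∫ v : EuclideanSpace ℝ (Fin n),
    Real.pi ^ (-(n : ℝ) / 2) * Real.exp (-‖v‖ ^ 2) *
      (volume (interiorSausage Ω (2 * √(D * t) * ‖v‖))).toReal
  rw [integral_gaussian_mul_measure_interiorSausage_toReal hΩvol (by positivity),
    ← ENNReal.ofReal_le_iff_le_toReal
      (lintegral_gaussian_mul_measure_interiorSausage_ne_top hΩvol _ _)]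
  calc ENNReal.ofReal (∫ x in Ωᶜ, ∫ y in Ω, heatKernel D t (x - y))
      ≤ ∫⁻ x in Ωᶜ, ENNReal.ofReal (∫ y in Ω, heatKernel D t (x - y)) :=
        ofReal_integral_le_lintegral_ofReal
          (ae_of_all _ fun _ => integral_nonneg fun _ => heatKernel_nonneg hDt _)
    _ ≤ ∫⁻ x in Ωᶜ, ∫⁻ y in Ω, ENNReal.ofReal (heatKernel D t (x - y)) :=
        lintegral_mono fun _ =>
          ofReal_integral_le_lintegral_ofReal (ae_of_all _ fun _ => heatKernel_nonneg hDt _)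
    _ ≤ _ := lintegral_compl_lintegral_heatKernel_le hΩm hDt
end

section
/- Let D₊, D₋ > 0, A = (√D₊ − √D₋)/(√D₊ + √D₋), and Γ₊₊(s,s₁,t) = (4πD₊t)^{-1/2}[exp(−(s−s₁)²/(4D₊t)) + A·exp(−(s+s₁)²/(4D₊t))]. Then for all s, s₁ > 0 with s ≠ s₁, the Varadhan short-time bound holds: lim_{t→0⁺} t · ln Γ₊₊(s, s₁, t) = −(s − s₁)²/(4D₊). -/
/-!
Write `a = -(s - s₁)²/(4D₊)` and `b = -(s + s₁)²/(4D₊)`; since `s, s₁ > 0`, `b < a`. Then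
`Γ₊₊ = (4πD₊t)^{-1/2} · e^{a/t} · (1 + A e^{(b-a)/t})`, and `t · ln` turns this product into a sum:
the prefactor contributes `t ln((4πD₊t)^{-1/2}) → 0`, the dominant Gaussian contributes exactly `a`,
and the last factor tends to `1`, so its contribution `t · ln(…)` tends to `0`.
-/

open Filter Real Topology

theorem tendsto_mul_log_mul {l : Filter ℝ} {f g : ℝ → ℝ} {α β : ℝ}
    (hf₀ : ∀ᶠ t in l, f t ≠ 0) (hg₀ : ∀ᶠ t in l, g t ≠ 0)
    (hf : Tendsto (fun t => t * log (f t)) l (𝓝 α))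
    (hg : Tendsto (fun t => t * log (g t)) l (𝓝 β)) :
    Tendsto (fun t => t * log (f t * g t)) l (𝓝 (α + β)) := by
  refine (hf.add hg).congr' ?_
  filter_upwards [hf₀, hg₀] with t hft hgt
  rw [log_mul hft hgt, mul_add]

theorem tendsto_mul_log_of_tendsto {l : Filter ℝ} (hl : l ≤ 𝓝 0) {g : ℝ → ℝ} {y : ℝ}
    (hg : Tendsto g l (𝓝 y)) (hy : y ≠ 0) :
    Tendsto (fun t => t * log (g t)) l (𝓝 0) := by
  simpa using (tendsto_id.mono_left hl).mul ((continuousAt_log hy).tendsto.comp hg)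

theorem tendsto_mul_log_rpow_const_mul {c : ℝ} (hc : 0 < c) (p : ℝ) :
    Tendsto (fun t => t * log ((c * t) ^ p)) (𝓝[>] 0) (𝓝 0) := by
  have hcont : Continuous fun t => p / c * (c * t * log (c * t)) :=
    continuous_const.mul (continuous_mul_log.comp (continuous_const_mul c))
  have hlim : Tendsto (fun t => p / c * (c * t * log (c * t))) (𝓝[>] 0) (𝓝 0) := by
    simpa using (hcont.tendsto 0).mono_left nhdsWithin_le_nhds
  refine hlim.congr' ?_
  filter_upwards [self_mem_nhdsWithin] with t (ht : 0 < t)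
  rw [log_rpow (by positivity)]
  field_simp

theorem tendsto_mul_log_exp_div (a : ℝ) :
    Tendsto (fun t => t * log (exp (a / t))) (𝓝[>] 0) (𝓝 a) := by
  refine tendsto_const_nhds.congr' ?_
  filter_upwards [self_mem_nhdsWithin] with t (ht : 0 < t)
  rw [log_exp, mul_div_cancel₀ _ ht.ne']

theorem tendsto_exp_div_nhdsGT_zero {c : ℝ} (hc : c < 0) :
    Tendsto (fun t => exp (c / t)) (𝓝[>] 0) (𝓝 0) :=
  tendsto_exp_atBot.comp <| (tendsto_inv_nhdsGT_zero.const_mul_atTop_of_neg hc).congr fun t =>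
    (div_eq_mul_inv c t).symm

theorem tendsto_one_add_mul_exp_div {c : ℝ} (hc : c < 0) (A : ℝ) :
    Tendsto (fun t => 1 + A * exp (c / t)) (𝓝[>] 0) (𝓝 1) := by
  simpa using ((tendsto_exp_div_nhdsGT_zero hc).const_mul A).const_add 1

theorem exp_div_add_mul_exp_div (a b A t : ℝ) :
    exp (a / t) + A * exp (b / t) = exp (a / t) * (1 + A * exp ((b - a) / t)) := by
  rw [mul_add, mul_one, sub_div, exp_sub, mul_left_comm, mul_div_cancel₀ _ (exp_ne_zero _)]

theorem eventually_exp_div_add_mul_exp_div_ne_zero {a b : ℝ} (hba : b < a) (A : ℝ) :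
    ∀ᶠ t in 𝓝[>] 0, exp (a / t) + A * exp (b / t) ≠ 0 := by
  filter_upwards [(tendsto_one_add_mul_exp_div (sub_neg.mpr hba) A).eventually_ne one_ne_zero]
    with t ht
  rw [exp_div_add_mul_exp_div]
  exact mul_ne_zero (exp_ne_zero _) ht

theorem tendsto_mul_log_exp_div_add_mul_exp_div {a b : ℝ} (hba : b < a) (A : ℝ) :
    Tendsto (fun t => t * log (exp (a / t) + A * exp (b / t))) (𝓝[>] 0) (𝓝 a) := by
  have hlim := tendsto_one_add_mul_exp_div (sub_neg.mpr hba) A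
  simp_rw [exp_div_add_mul_exp_div]
  simpa using tendsto_mul_log_mul (Eventually.of_forall fun t => exp_ne_zero _)
    (hlim.eventually_ne one_ne_zero) (tendsto_mul_log_exp_div a)
    (tendsto_mul_log_of_tendsto nhdsWithin_le_nhds hlim one_ne_zero)

theorem varadhan_bound_lambda_infty_same_side_general
    (Dp A : ℝ) (hDp : 0 < Dp)
    (Γpp : ℝ → ℝ → ℝ → ℝ)
    (hΓpp : ∀ s s₁ t, Γpp s s₁ t = (4 * Real.pi * Dp * t) ^ (-(1 : ℝ) / 2) *
        (Real.exp (-(s - s₁) ^ 2 / (4 * Dp * t)) + A * Real.exp (-(s + s₁) ^ 2 / (4 * Dp * t))))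
    (s s₁ : ℝ) (hs : 0 < s) (hs₁ : 0 < s₁) :
    Tendsto (fun t => t * Real.log (Γpp s s₁ t)) (nhdsWithin 0 (Set.Ioi 0))
      (nhds (-(s - s₁) ^ 2 / (4 * Dp))) := by
  have hc : 0 < 4 * π * Dp := by positivity
  have hba : -(s + s₁) ^ 2 / (4 * Dp) < -(s - s₁) ^ 2 / (4 * Dp) :=
    div_lt_div_of_pos_right (by nlinarith) (by positivity)
  have hprefactor : ∀ᶠ t in 𝓝[>] 0, (4 * π * Dp * t) ^ (-(1 : ℝ) / 2) ≠ 0 := by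
    filter_upwards [self_mem_nhdsWithin] with t (ht : 0 < t)
    exact (rpow_pos_of_pos (by positivity) _).ne'
  have hΓ : ∀ t, Γpp s s₁ t = (4 * π * Dp * t) ^ (-(1 : ℝ) / 2) *
      (exp (-(s - s₁) ^ 2 / (4 * Dp) / t) + A * exp (-(s + s₁) ^ 2 / (4 * Dp) / t)) := by
    intro t
    rw [hΓpp, div_div, div_div]
  simp_rw [hΓ]
  simpa only [zero_add] using tendsto_mul_log_mul hprefactor (eventually_exp_div_add_mul_exp_div_ne_zero hba A)
    (tendsto_mul_log_rpow_const_mul hc _) (tendsto_mul_log_exp_div_add_mul_exp_div hba A)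

/-- Varadhan short-time bound for the 'same side' component of the `λ = ∞` transmission
Green function: `lim_{t→0⁺} t · ln Γ₊₊(s, s₁, t) = −(s − s₁)²/(4D₊)` for `s, s₁ > 0`, `s ≠ s₁`. -/
theorem varadhan_bound_lambda_infty_same_side
    (Dp Dm A : ℝ) (hDp : 0 < Dp) (hDm : 0 < Dm)
    (hA : A = (Real.sqrt Dp - Real.sqrt Dm) / (Real.sqrt Dp + Real.sqrt Dm))
    (Γpp : ℝ → ℝ → ℝ → ℝ)
    (hΓpp : ∀ s s₁ t, Γpp s s₁ t = (4 * Real.pi * Dp * t) ^ (-(1 : ℝ) / 2) *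
        (Real.exp (-(s - s₁) ^ 2 / (4 * Dp * t)) + A * Real.exp (-(s + s₁) ^ 2 / (4 * Dp * t))))
    (s s₁ : ℝ) (hs : 0 < s) (hs₁ : 0 < s₁) (hne : s ≠ s₁) :
    Tendsto (fun t => t * Real.log (Γpp s s₁ t)) (nhdsWithin 0 (Set.Ioi 0))
      (nhds (-(s - s₁) ^ 2 / (4 * Dp))) :=
  varadhan_bound_lambda_infty_same_side_general Dp A hDp Γpp hΓpp s s₁ hs hs₁
end

section
/- Let D₊, D₋ > 0, α = 1/√D₋ + 1/√D₊, A = (√D₊ − √D₋)/(√D₊ + √D₋), B = √D₊/(√D₊ + √D₋), Erfc(x) = (2/√π)∫_x^∞ e^{−u²} du. For λ > 0 define G₊₊(s,s₁,t;λ) = (4πD₊t)^{-1/2}[exp(−(s−s₁)²/(4D₊t)) + exp(−(s+s₁)²/(4D₊t))] − (λ/D₊)·exp(λα(s+s₁)/√D₊ + λ²α²t)·Erfc((s+s₁)/(2√(D₊t)) + λα√t), and define Γ₊₊(s,s₁,t) = (4πD₊t)^{-1/2}[exp(−(s−s₁)²/(4D₊t)) + A·exp(−(s+s₁)²/(4D₊t))].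 Then for every fixed t > 0 and fixed s, s₁ ≥ 0 with s + s₁ > 0: lim_{λ→∞} G₊₊(s, s₁, t; λ) = Γ₊₊(s, s₁, t). -/
open MeasureTheory Set Filter Real Topology

/-! Completing the square, `λα(s+s₁)/√D₊ + λ²α²t = -b² + X²` with `b = (s+s₁)/(2√(D₊t))` and
`X = b + λα√t`, turns the finite-`λ` correction term into
`(e^{-b²}/D₊)(2/√π) · λ e^{X²} ∫_X^∞ e^{-u²} du`. The Mills-ratio asymptotics
`x e^{x²} ∫_x^∞ e^{-u²} du → 1/2`, squeezed between the bounds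
`x e^{-x²}/(2x²+1) ≤ ∫_x^∞ e^{-u²} du ≤ e^{-x²}/(2x)`, show that it tends to
`e^{-b²}/(√π D₊ α √t) = (4πD₊t)^{-1/2} (1 - A) e^{-(s+s₁)²/(4D₊t)}`. -/

theorem hasDerivAt_exp_neg_sq (u : ℝ) :
    HasDerivAt (fun u => exp (-u ^ 2)) (-2 * u * exp (-u ^ 2)) u := by
  simpa [mul_comm, mul_assoc] using ((hasDerivAt_pow 2 u).fun_neg).exp

theorem tendsto_exp_neg_sq_atTop : Tendsto (fun u : ℝ => exp (-u ^ 2)) atTop (𝓝 0) :=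
  tendsto_exp_atBot.comp <| tendsto_neg_atTop_atBot.comp (tendsto_pow_atTop two_ne_zero)

theorem integrableOn_Ioi_exp_neg_sq (x : ℝ) : IntegrableOn (fun u : ℝ => exp (-u ^ 2)) (Ioi x) := by
  simpa using (integrable_exp_neg_mul_sq one_pos).integrableOn (s := Ioi x)

theorem integral_Ioi_exp_neg_sq_le {x : ℝ} (hx : 0 < x) :
    ∫ u in Ioi x, exp (-u ^ 2) ≤ exp (-x ^ 2) / (2 * x) := by
  have hderiv : ∀ u ∈ Ici x, HasDerivAt (fun u => -exp (-u ^ 2) / (2 * x))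
      (u * exp (-u ^ 2) / x) u := fun u _ =>
    ((hasDerivAt_exp_neg_sq u).fun_neg.div_const (2 * x)).congr_deriv (by ring)
  have hnonneg : ∀ u ∈ Ioi x, 0 ≤ u * exp (-u ^ 2) / x := fun u hu => by
    have : 0 < u := hx.trans hu; positivity
  have hlim : Tendsto (fun u => -exp (-u ^ 2) / (2 * x)) atTop (𝓝 0) := by
    simpa using tendsto_exp_neg_sq_atTop.neg.div_const (2 * x)
  calc ∫ u in Ioi x, exp (-u ^ 2)
      ≤ ∫ u in Ioi x, u * exp (-u ^ 2) / x := by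
        refine setIntegral_mono_on (integrableOn_Ioi_exp_neg_sq x)
          (integrableOn_Ioi_deriv_of_nonneg' hderiv hnonneg hlim) measurableSet_Ioi fun u hu => ?_
        rw [le_div_iff₀ hx, mul_comm u]
        exact mul_le_mul_of_nonneg_left hu.out.le (exp_pos _).le
    _ = exp (-x ^ 2) / (2 * x) := by
        rw [integral_Ioi_of_hasDerivAt_of_nonneg' hderiv hnonneg hlim]; ring

theorem le_integral_Ioi_exp_neg_sq {x : ℝ} (hx : 0 < x) :
    x * exp (-x ^ 2) / (2 * x ^ 2 + 1) ≤ ∫ u in Ioi x, exp (-u ^ 2) := by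
  -- `-exp (-u²) / (2u)` has derivative `exp (-u²) (1 + 1 / (2u²))`; the factor `c` brings it below
  -- `exp (-u²)` on `[x, ∞)`.
  set c := 2 * x ^ 2 / (2 * x ^ 2 + 1) with hc
  have hderiv : ∀ u ∈ Ici x, HasDerivAt (fun u => -c * exp (-u ^ 2) / (2 * u))
      (c * (exp (-u ^ 2) + exp (-u ^ 2) / (2 * u ^ 2))) u := fun u hu => by
    have hu : u ≠ 0 := (hx.trans_le hu).ne'
    refine (((hasDerivAt_exp_neg_sq u).const_mul (-c)).fun_div
      ((hasDerivAt_id u).const_mul 2) (by simpa using hu)).congr_deriv ?_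
    simp only [id]
    field_simp
    ring
  have hnonneg : ∀ u ∈ Ioi x, 0 ≤ c * (exp (-u ^ 2) + exp (-u ^ 2) / (2 * u ^ 2)) :=
    fun u _ => by positivity
  have hlim : Tendsto (fun u => -c * exp (-u ^ 2) / (2 * u)) atTop (𝓝 0) := by
    simpa using (tendsto_exp_neg_sq_atTop.const_mul (-c)).div_atTop
      (tendsto_id.const_mul_atTop two_pos)
  calc x * exp (-x ^ 2) / (2 * x ^ 2 + 1)
      = ∫ u in Ioi x, c * (exp (-u ^ 2) + exp (-u ^ 2) / (2 * u ^ 2)) := by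
        rw [integral_Ioi_of_hasDerivAt_of_nonneg' hderiv hnonneg hlim, hc]; field_simp; ring
    _ ≤ ∫ u in Ioi x, exp (-u ^ 2) := by
        refine setIntegral_mono_on (integrableOn_Ioi_deriv_of_nonneg' hderiv hnonneg hlim)
          (integrableOn_Ioi_exp_neg_sq x) measurableSet_Ioi fun u hu => ?_
        have hxu : x ^ 2 ≤ u ^ 2 := pow_le_pow_left₀ hx.le hu.out.le 2
        have hu : 0 < u := hx.trans hu
        have : c * (1 + 1 / (2 * u ^ 2)) ≤ 1 := by
          rw [hc, div_mul_eq_mul_div, div_le_one (by positivity)]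
          field_simp
          nlinarith
        calc c * (exp (-u ^ 2) + exp (-u ^ 2) / (2 * u ^ 2))
            = c * (1 + 1 / (2 * u ^ 2)) * exp (-u ^ 2) := by ring
          _ ≤ exp (-u ^ 2) := mul_le_of_le_one_left (exp_pos _).le this

theorem tendsto_mul_exp_sq_mul_integral_Ioi_exp_neg_sq :
    Tendsto (fun x : ℝ => x * exp (x ^ 2) * ∫ u in Ioi x, exp (-u ^ 2)) atTop (𝓝 (1 / 2)) := by
  have hlower : Tendsto (fun x : ℝ => (1 - (2 * x ^ 2 + 1)⁻¹) / 2) atTop (𝓝 (1 / 2)) := by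
    have h := (tendsto_inv_atTop_zero.comp <| tendsto_atTop_add_const_right _ 1 <|
      (tendsto_pow_atTop (α := ℝ) two_ne_zero).const_mul_atTop two_pos).const_sub 1 |>.div_const 2
    simpa using h
  refine tendsto_of_tendsto_of_tendsto_of_le_of_le' hlower tendsto_const_nhds ?_ ?_ <;>
    filter_upwards [eventually_gt_atTop 0] with x hx
  · have hexp : exp (x ^ 2) * exp (-x ^ 2) = 1 := by rw [← exp_add]; simp
    calc (1 - (2 * x ^ 2 + 1)⁻¹) / 2
        = x * exp (x ^ 2) * (x * exp (-x ^ 2) / (2 * x ^ 2 + 1)) := by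
          field_simp; rw [mul_assoc, hexp]; ring
      _ ≤ _ := by gcongr; exact le_integral_Ioi_exp_neg_sq hx
  · calc x * exp (x ^ 2) * ∫ u in Ioi x, exp (-u ^ 2)
        ≤ x * exp (x ^ 2) * (exp (-x ^ 2) / (2 * x)) := by
          gcongr; exact integral_Ioi_exp_neg_sq_le hx
      _ = 1 / 2 := by rw [exp_neg]; field_simp

theorem tendsto_mul_exp_sq_mul_integral_Ioi_exp_neg_sq_affine (b : ℝ) {k : ℝ} (hk : 0 < k) :
    Tendsto (fun l : ℝ => l * exp ((b + l * k) ^ 2) * ∫ u in Ioi (b + l * k), exp (-u ^ 2))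
      atTop (𝓝 (1 / (2 * k))) := by
  have hX : Tendsto (fun l : ℝ => b + l * k) atTop atTop :=
    tendsto_atTop_add_const_left _ b (tendsto_id.atTop_mul_const hk)
  have hratio : Tendsto (fun l : ℝ => l / (b + l * k)) atTop (𝓝 k⁻¹) := by
    have h : Tendsto (fun l : ℝ => b / l + k) atTop (𝓝 k) := by
      simpa using (tendsto_const_nhds.div_atTop tendsto_id).add_const k
    refine (h.inv₀ hk.ne').congr' ?_
    filter_upwards [eventually_gt_atTop 0] with l hl
    field_simp
  have h := hratio.mul (tendsto_mul_exp_sq_mul_integral_Ioi_exp_neg_sq.comp hX)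
  rw [show k⁻¹ * (1 / 2) = 1 / (2 * k) by ring] at h
  refine h.congr' ?_
  filter_upwards [hX.eventually_ne_atTop 0] with l hl
  simp only [Function.comp_apply]
  field_simp

theorem rpow_neg_one_div_two_eq_inv_sqrt {x : ℝ} (hx : 0 ≤ x) : x ^ (-(1 : ℝ) / 2) = (√x)⁻¹ := by
  rw [neg_div, rpow_neg hx, sqrt_eq_rpow]

theorem green_function_tendsto_lambda_infty_general
    (Dp Dm α A : ℝ) (hDp : 0 < Dp) (hDm : 0 < Dm)
    (hα : α = 1 / Real.sqrt Dm + 1 / Real.sqrt Dp)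
    (hA : A = (Real.sqrt Dp - Real.sqrt Dm) / (Real.sqrt Dp + Real.sqrt Dm))
    (Erfc : ℝ → ℝ)
    (hErfc : ∀ x, Erfc x = (2 / Real.sqrt Real.pi) * ∫ u in Set.Ioi x, Real.exp (-u ^ 2))
    (s s₁ t : ℝ) (ht : 0 < t) :
    Tendsto (fun lam : ℝ =>
        (4 * Real.pi * Dp * t) ^ (-(1 : ℝ) / 2) *
          (Real.exp (-(s - s₁) ^ 2 / (4 * Dp * t)) + Real.exp (-(s + s₁) ^ 2 / (4 * Dp * t))) -
        (lam / Dp) * Real.exp (lam * α * (s + s₁) / Real.sqrt Dp + lam ^ 2 * α ^ 2 * t) *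
          Erfc ((s + s₁) / (2 * Real.sqrt (Dp * t)) + lam * α * Real.sqrt t))
      atTop
      (nhds ((4 * Real.pi * Dp * t) ^ (-(1 : ℝ) / 2) *
        (Real.exp (-(s - s₁) ^ 2 / (4 * Dp * t)) +
          A * Real.exp (-(s + s₁) ^ 2 / (4 * Dp * t))))) := by
  have hpt : √(Dp * t) = √Dp * √t := sqrt_mul hDp.le t
  have hk : 0 < α * √t := by rw [hα]; positivity
  set b := (s + s₁) / (2 * √(Dp * t)) with hb
  have hsquare : ∀ lam : ℝ, lam * α * (s + s₁) / √Dp + lam ^ 2 * α ^ 2 * t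
      = -b ^ 2 + (b + lam * (α * √t)) ^ 2 := fun lam => by
    rw [hb, hpt]; field_simp; rw [sq_sqrt ht.le]; ring
  have hb2 : -b ^ 2 = -(s + s₁) ^ 2 / (4 * Dp * t) := by
    rw [hb, hpt]; field_simp; rw [sq_sqrt ht.le, sq_sqrt hDp.le]; ring
  have hcoeff : exp (-b ^ 2) / Dp * (2 / √π) * (1 / (2 * (α * √t)))
      = (4 * π * Dp * t) ^ (-(1 : ℝ) / 2) * (1 - A) * exp (-(s + s₁) ^ 2 / (4 * Dp * t)) := by
    have hsqrt : √(4 * π * Dp * t) = 2 * √π * √Dp * √t := by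
      rw [sqrt_mul' _ ht.le, sqrt_mul' _ hDp.le, sqrt_mul' _ pi_pos.le,
        show (4 : ℝ) = 2 ^ 2 by norm_num, sqrt_sq two_pos.le]
    rw [rpow_neg_one_div_two_eq_inv_sqrt (by positivity), hsqrt, hb2, hA, hα]
    field_simp
    rw [sq_sqrt hDp.le]
    ring
  have h := (tendsto_mul_exp_sq_mul_integral_Ioi_exp_neg_sq_affine b hk).const_mul
    (exp (-b ^ 2) / Dp * (2 / √π))
  rw [hcoeff] at h
  convert (tendsto_const_nhds (x := (4 * π * Dp * t) ^ (-(1 : ℝ) / 2) *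
    (exp (-(s - s₁) ^ 2 / (4 * Dp * t)) + exp (-(s + s₁) ^ 2 / (4 * Dp * t))))).sub h using 1
  · ext lam; rw [hsquare, hErfc, exp_add, mul_assoc lam α]; ring
  · congr 1; ring

/-- As the interface resistance coefficient `λ` tends to `∞`, the 'same side' component
`G₊₊(s, s₁, t; λ)` of the finite-`λ` transmission Green function converges to the
corresponding component `Γ₊₊(s, s₁, t)` of the perfect-contact (`λ = ∞`) Green function,
for fixed `t > 0` and fixed `s, s₁ ≥ 0` with `s + s₁ > 0`. -/
theorem green_function_tendsto_lambda_infty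
    (Dp Dm α A : ℝ) (hDp : 0 < Dp) (hDm : 0 < Dm)
    (hα : α = 1 / Real.sqrt Dm + 1 / Real.sqrt Dp)
    (hA : A = (Real.sqrt Dp - Real.sqrt Dm) / (Real.sqrt Dp + Real.sqrt Dm))
    (Erfc : ℝ → ℝ)
    (hErfc : ∀ x, Erfc x = (2 / Real.sqrt Real.pi) * ∫ u in Set.Ioi x, Real.exp (-u ^ 2))
    (s s₁ t : ℝ) (hs : 0 ≤ s) (hs₁ : 0 ≤ s₁) (hss₁ : 0 < s + s₁) (ht : 0 < t) :
    Tendsto (fun lam : ℝ =>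
        (4 * Real.pi * Dp * t) ^ (-(1 : ℝ) / 2) *
          (Real.exp (-(s - s₁) ^ 2 / (4 * Dp * t)) + Real.exp (-(s + s₁) ^ 2 / (4 * Dp * t))) -
        (lam / Dp) * Real.exp (lam * α * (s + s₁) / Real.sqrt Dp + lam ^ 2 * α ^ 2 * t) *
          Erfc ((s + s₁) / (2 * Real.sqrt (Dp * t)) + lam * α * Real.sqrt t))
      atTop
      (nhds ((4 * Real.pi * Dp * t) ^ (-(1 : ℝ) / 2) *
        (Real.exp (-(s - s₁) ^ 2 / (4 * Dp * t)) +
          A * Real.exp (-(s + s₁) ^ 2 / (4 * Dp * t))))) :=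
  green_function_tendsto_lambda_infty_general Dp Dm α A hDp hDm hα hA Erfc hErfc s s₁ t ht
end

section
/- Let D₊, D₋ > 0, B = √D₊/(√D₊ + √D₋), and Γ₋₊(s,s₁,t) = B·(πD₊t)^{-1/2}·exp(−(s − s₁√(D₋/D₊))²/(4D₋t)). Then for all t > 0 the total heat transmitted through a perfectly conducting flat interface is exactly ∫_{−∞}^0 ∫_0^∞ Γ₋₊(s, s₁, t) ds₁ ds = (2/√π) · (√(D₊D₋)/(√D₊ + √D₋)) · √t. -/
/-!
Substituting `x = s₁ √(D₋/D₊) - s`, the inner integral becomes `√(D₊/D₋)` times the Gaussian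
tail `∫_{x > -s} e^{-x²/(4D₋t)} dx`. Integrating these tails over `s < 0` is, by Fubini,
the first moment `∫_{x > 0} x e^{-x²/(4D₋t)} dx = 2D₋t`, and the constants collapse to the
`√t` law.
-/

open MeasureTheory Set Real

section

variable {E : Type*} [NormedAddCommGroup E] [NormedSpace ℝ E]

theorem integral_Ioi_comp_sub_right (g : ℝ → E) (a s : ℝ) :
    ∫ y in Ioi a, g (y - s) = ∫ x in Ioi (a - s), g x := by
  rw [← (measurePreserving_sub_right volume s).setIntegral_preimage_emb
    (measurableEmbedding_subRight s) g (Ioi (a - s)), preimage_sub_const_Ioi, sub_add_cancel]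

variable [CompleteSpace E]

theorem setIntegral_Ioi_indicator_Iio_const {a x : ℝ} (hax : a ≤ x) (c : E) :
    ∫ w in Ioi a, (Iio x).indicator (fun _ => c) w = (x - a) • c := by
  rw [integral_indicator measurableSet_Iio, Measure.restrict_restrict measurableSet_Iio,
    Iio_inter_Ioi, setIntegral_const, Real.volume_real_Ioo_of_le hax]

theorem integral_Ioi_integral_Ioi_eq_integral_smul {f : ℝ → E}
    (hf : IntegrableOn (fun x => x • f x) (Ioi 0)) :
    ∫ w in Ioi (0 : ℝ), ∫ x in Ioi w, f x = ∫ x in Ioi (0 : ℝ), x • f x := by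
  set μ := volume.restrict (Ioi (0 : ℝ))
  set F : ℝ → ℝ → E := fun w x => (Ioi w).indicator f x
  have hF_swap : ∀ w x, F w x = (Iio x).indicator (fun _ => f x) w := fun _ _ => rfl
  have hf_meas : AEStronglyMeasurable f μ := by
    refine (measurable_inv.aestronglyMeasurable.smul hf.aestronglyMeasurable).congr ?_
    refine ae_restrict_of_forall_mem measurableSet_Ioi fun x hx => ?_
    rw [Pi.smul_apply', smul_smul, inv_mul_cancel₀ (ne_of_gt (mem_Ioi.1 hx)), one_smul]
  have hF_meas : AEStronglyMeasurable (Function.uncurry F) (μ.prod μ) :=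
    hf_meas.comp_snd.indicator (measurableSet_lt measurable_fst measurable_snd)
  have hF_int : Integrable (Function.uncurry F) (μ.prod μ) := by
    refine (integrable_prod_iff' hF_meas).2 ⟨?_, ?_⟩
    · refine ae_restrict_of_forall_mem measurableSet_Ioi fun x hx => ?_
      simp only [Function.uncurry, hF_swap]
      rw [integrable_indicator_iff measurableSet_Iio]
      refine integrableOn_const ?_
      rw [Measure.restrict_apply measurableSet_Iio, Iio_inter_Ioi, Real.volume_Ioo]
      exact ENNReal.ofReal_ne_top
    · refine hf.norm.congr (ae_restrict_of_forall_mem measurableSet_Ioi fun x hx => ?_)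
      simp only [Function.uncurry, hF_swap, norm_indicator_eq_indicator_norm]
      rw [setIntegral_Ioi_indicator_Iio_const (le_of_lt hx), norm_smul, sub_zero,
        Real.norm_of_nonneg (le_of_lt hx), smul_eq_mul]
  calc ∫ w in Ioi (0 : ℝ), ∫ x in Ioi w, f x = ∫ w, ∫ x, F w x ∂μ ∂μ := by
        refine setIntegral_congr_fun measurableSet_Ioi fun w hw => ?_
        rw [integral_indicator measurableSet_Ioi, Measure.restrict_restrict measurableSet_Ioi,
          Ioi_inter_Ioi, max_eq_left (le_of_lt hw)]
    _ = ∫ x, ∫ w, F w x ∂μ ∂μ := integral_integral_swap hF_int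
    _ = ∫ x in Ioi (0 : ℝ), x • f x := by
        refine setIntegral_congr_fun measurableSet_Ioi fun x hx => ?_
        simp only [hF_swap]
        rw [setIntegral_Ioi_indicator_Iio_const (le_of_lt hx), sub_zero]

theorem integral_Iio_integral_Ioi_comp_mul_sub {f : ℝ → E}
    (hf : IntegrableOn (fun x => x • f x) (Ioi 0)) {c : ℝ} (hc : 0 < c) :
    ∫ s in Iio (0 : ℝ), ∫ s₁ in Ioi (0 : ℝ), f (s₁ * c - s) =
      c⁻¹ • ∫ x in Ioi (0 : ℝ), x • f x := by
  have h_inner : ∀ s, ∫ s₁ in Ioi (0 : ℝ), f (s₁ * c - s) = c⁻¹ • ∫ x in Ioi (-s), f x := by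
    intro s
    rw [integral_comp_mul_right_Ioi (fun y => f (y - s)) 0 hc, zero_mul,
      integral_Ioi_comp_sub_right, zero_sub]
  simp_rw [h_inner]
  rw [integral_smul, ← integral_Iic_eq_integral_Iio,
    integral_comp_neg_Iic 0 (fun w => ∫ x in Ioi w, f x), neg_zero,
    integral_Ioi_integral_Ioi_eq_integral_smul hf]

end

theorem integral_Ioi_mul_exp_neg_mul_sq {b : ℝ} (hb : 0 < b) :
    ∫ x in Ioi (0 : ℝ), x * exp (-b * x ^ 2) = (2 * b)⁻¹ := by
  have h := integral_mul_cexp_neg_mul_sq (b := (b : ℂ)) (by simpa using hb)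
  apply Complex.ofReal_injective
  rw [← integral_complex_ofReal]
  push_cast
  exact h

/-- The total heat transmitted through a perfectly conducting flat interface (`λ = ∞`) is
exactly `(2/√π) · (√(D₊D₋)/(√D₊ + √D₋)) · √t`. -/
theorem transmitted_heat_lambda_infty_sqrt_t_law
    (Dp Dm B : ℝ) (hDp : 0 < Dp) (hDm : 0 < Dm)
    (hB : B = Real.sqrt Dp / (Real.sqrt Dp + Real.sqrt Dm))
    (Γmp : ℝ → ℝ → ℝ → ℝ)
    (hΓmp : ∀ s s₁ t, Γmp s s₁ t = B * (Real.pi * Dp * t) ^ (-(1 : ℝ) / 2) *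
        Real.exp (-(s - s₁ * Real.sqrt (Dm / Dp)) ^ 2 / (4 * Dm * t))) :
    ∀ t : ℝ, 0 < t →
      (∫ s in Set.Iio (0 : ℝ), ∫ s₁ in Set.Ioi (0 : ℝ), Γmp s s₁ t) =
        2 / Real.sqrt Real.pi * (Real.sqrt (Dp * Dm) / (Real.sqrt Dp + Real.sqrt Dm)) *
          Real.sqrt t := by
  intro t ht
  set c := √(Dm / Dp)
  set b := (4 * Dm * t)⁻¹
  set K := B * (π * Dp * t) ^ (-(1 : ℝ) / 2)
  have hb : 0 < b := by positivity
  have hΓ : ∀ s s₁, Γmp s s₁ t = K * exp (-b * (s₁ * c - s) ^ 2) := by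
    intro s s₁
    rw [hΓmp]
    congr 2
    ring
  calc (∫ s in Iio 0, ∫ s₁ in Ioi 0, Γmp s s₁ t)
      = K * ∫ s in Iio 0, ∫ s₁ in Ioi 0, exp (-b * (s₁ * c - s) ^ 2) := by
        simp_rw [hΓ, integral_const_mul]
    _ = K * (c⁻¹ * (2 * b)⁻¹) := by
        rw [integral_Iio_integral_Ioi_comp_mul_sub (f := fun x => exp (-b * x ^ 2))
          (integrable_mul_exp_neg_mul_sq hb).integrableOn (sqrt_pos.2 (div_pos hDm hDp))]
        simp only [smul_eq_mul]
        rw [integral_Ioi_mul_exp_neg_mul_sq hb]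
    _ = _ := by
        simp only [K, c, b]
        rw [hB, show (-(1 : ℝ) / 2) = -(1 / 2 : ℝ) by norm_num,
          rpow_neg (by positivity), ← sqrt_eq_rpow, sqrt_mul' _ ht.le, sqrt_mul' _ hDp.le,
          sqrt_div' _ hDp.le, sqrt_mul hDp.le]
        field_simp
        rw [sq_sqrt ht.le, sq_sqrt hDm.le]
        ring
end

section
/- Let D₊, D₋ > 0, λ > 0, α = 1/√D₋ + 1/√D₊, Erfc(x) = (2/√π)∫_x^∞ e^{−u²} du, and G₋₊(s,s₁,t) = (λ/√(D₋D₊))·exp((λα/√D₋)(−s + s₁√(D₋/D₊)) + λ²α²t)·Erfc((−s + s₁√(D₋/D₊))/(2√(D₋t)) + λα√t). Then the total heat transmitted through a flat interface of resistance λ is linear in t to leading order: lim_{t→0⁺} (1/t) · ∫_{−∞}^0 ∫_0^∞ G₋₊(s, s₁, t) ds₁ ds = λ. -/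
/-!
Substituting `y = -s + s₁ √(D₋/D₊)` and then `z = y / (2√(D₋ t)) + d` with `d = λα√t`
turns the exponent of `G₋₊` into `2dz - d²` and the quadrant integral into
`4λt e^{-d²} ∫_{m>d} ∫_{z>m} e^{2dz} Erfc z dz dm`. The inner integral has the
antiderivative `(e^{2dz} Erfc z - e^{d²} Erfc (z - d)) / (2d)`, and `z Erfc z - e^{-z²}/√π`
is an antiderivative of `Erfc`; this gives the closed form `R(d) / (λα²)` for the
transmitted heat, where `R(d) = e^{d²} Erfc d - 1 + 2d/√π`. Since `R(0) = 0` and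
`R'(d) = 2d e^{d²} Erfc d`, l'Hôpital's rule gives `R(d) / d² → 1`, and dividing by
`t = d² / (λα)²` leaves the limit `λ`.
-/

open MeasureTheory Set Filter Real Topology

section Shift

variable {E : Type*} [NormedAddCommGroup E]

theorem integral_comp_add_right_Ioi [NormedSpace ℝ E] (f : ℝ → E) (a c : ℝ) :
    ∫ x in Ioi a, f (x + c) = ∫ x in Ioi (a + c), f x := by
  simpa using (measurePreserving_add_right volume c).setIntegral_preimage_emb
    (measurableEmbedding_addRight c) f (Ioi (a + c))

theorem integrableOn_Ioi_comp_add_right {f : ℝ → E} {a : ℝ} (c : ℝ)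
    (hf : IntegrableOn f (Ioi (a + c))) : IntegrableOn (fun x => f (x + c)) (Ioi a) := by
  have := ((measurePreserving_add_right volume c).integrableOn_comp_preimage
    (measurableEmbedding_addRight c)).2 hf
  rwa [preimage_add_const_Ioi, add_sub_cancel_right] at this

theorem integral_comp_mul_add_Ioi [NormedSpace ℝ E] (f : ℝ → E) (a : ℝ) {b : ℝ} (hb : 0 < b)
    (c : ℝ) :
    ∫ x in Ioi a, f (b * x + c) = b⁻¹ • ∫ x in Ioi (b * a + c), f x := by
  rw [integral_comp_mul_left_Ioi (fun y => f (y + c)) a hb, integral_comp_add_right_Ioi]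

theorem integral_Iio_integral_Ioi_comp_div_add [NormedSpace ℝ E] (h : ℝ → E) {b c : ℝ}
    (hb : 0 < b) (hc : 0 < c) (d : ℝ) :
    ∫ s in Iio 0, ∫ s₁ in Ioi 0, h ((-s + s₁ * c) / b + d)
      = (b ^ 2 / c) • ∫ m in Ioi d, ∫ z in Ioi m, h z := by
  have hinner : ∀ s, ∫ s₁ in Ioi 0, h ((-s + s₁ * c) / b + d)
      = (c / b)⁻¹ • ∫ z in Ioi (b⁻¹ * -s + d), h z := by
    intro s
    have hlin : ∀ s₁, (-s + s₁ * c) / b + d = c / b * s₁ + (b⁻¹ * -s + d) := by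
      intro s₁; field_simp; ring
    simp_rw [hlin]
    rw [integral_comp_mul_add_Ioi _ _ (div_pos hc hb), mul_zero, zero_add]
  simp_rw [hinner]
  rw [integral_smul, ← integral_Iic_eq_integral_Iio,
    integral_comp_neg_Iic 0 (fun w => ∫ z in Ioi (b⁻¹ * w + d), h z), neg_zero,
    integral_comp_mul_add_Ioi (fun m => ∫ z in Ioi m, h z) _ (inv_pos.2 hb), mul_zero, zero_add,
    smul_smul]
  congr 1
  field_simp

end Shift

theorem integrable_exp_neg_sq : Integrable fun u : ℝ => exp (-u ^ 2) := by
  simpa using integrable_exp_neg_mul_sq one_pos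

theorem integral_exp_neg_sq_Ioi_zero : ∫ u in Ioi (0 : ℝ), exp (-u ^ 2) = √π / 2 := by
  simpa using integral_gaussian_Ioi 1

theorem integral_exp_neg_sq_Ioi_le {x : ℝ} (hx : 0 ≤ x) :
    ∫ u in Ioi x, exp (-u ^ 2) ≤ exp (-x ^ 2) * (√π / 2) := by
  -- `u ^ 2 ≥ x ^ 2 + (u - x) ^ 2` for `u ≥ x ≥ 0`
  calc ∫ u in Ioi x, exp (-u ^ 2)
      ≤ ∫ u in Ioi x, exp (-x ^ 2) * exp (-(u + -x) ^ 2) := by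
        refine setIntegral_mono_on integrable_exp_neg_sq.integrableOn
          (integrableOn_Ioi_comp_add_right (f := fun v => exp (-x ^ 2) * exp (-v ^ 2)) (-x)
            (integrable_exp_neg_sq.const_mul _).integrableOn) measurableSet_Ioi fun u hu => ?_
        rw [← exp_add, exp_le_exp]
        nlinarith [mem_Ioi.1 hu]
    _ = exp (-x ^ 2) * (√π / 2) := by
        rw [integral_const_mul, integral_comp_add_right_Ioi (fun u => exp (-u ^ 2)),
          add_neg_cancel, integral_exp_neg_sq_Ioi_zero]

noncomputable def erfc (x : ℝ) : ℝ :=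
  2 / √π * ∫ u in Ioi x, exp (-u ^ 2)

theorem erfc_nonneg (x : ℝ) : 0 ≤ erfc x :=
  mul_nonneg (by positivity) (setIntegral_nonneg measurableSet_Ioi fun u _ => (exp_pos _).le)

@[simp]
theorem erfc_zero : erfc 0 = 1 := by
  rw [erfc, integral_exp_neg_sq_Ioi_zero]
  field_simp

theorem erfc_le_exp_neg_sq {x : ℝ} (hx : 0 ≤ x) : erfc x ≤ exp (-x ^ 2) := by
  calc erfc x ≤ 2 / √π * (exp (-x ^ 2) * (√π / 2)) :=
        mul_le_mul_of_nonneg_left (integral_exp_neg_sq_Ioi_le hx) (by positivity)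
    _ = exp (-x ^ 2) := by field_simp

theorem hasDerivAt_erfc (x : ℝ) : HasDerivAt erfc (-(2 / √π * exp (-x ^ 2))) x := by
  have hcont : Continuous fun u : ℝ => exp (-u ^ 2) := by fun_prop
  have hprim : HasDerivAt (fun y => ∫ u in (0 : ℝ)..y, exp (-u ^ 2)) (exp (-x ^ 2)) x :=
    intervalIntegral.integral_hasDerivAt_right integrable_exp_neg_sq.intervalIntegrable
      hcont.stronglyMeasurable.stronglyMeasurableAtFilter hcont.continuousAt
  have heq : erfc = fun y => 2 / √π * ((∫ u in Ioi (0 : ℝ), exp (-u ^ 2)) -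
      ∫ u in (0 : ℝ)..y, exp (-u ^ 2)) := by
    funext y
    rw [erfc, ← intervalIntegral.integral_Ioi_sub_Ioi' integrable_exp_neg_sq.integrableOn
      integrable_exp_neg_sq.integrableOn, sub_sub_cancel]
  rw [heq]
  exact ((hprim.const_sub _).const_mul (2 / √π)).congr_deriv (by ring)

@[fun_prop]
theorem continuous_erfc : Continuous erfc :=
  continuous_iff_continuousAt.2 fun x => (hasDerivAt_erfc x).continuousAt

theorem exp_mul_erfc_le (d : ℝ) {z : ℝ} (hz : 0 ≤ z) :
    exp (2 * d * z) * erfc z ≤ exp (d ^ 2) * exp (-(z + -d) ^ 2) :=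
  calc exp (2 * d * z) * erfc z ≤ exp (2 * d * z) * exp (-z ^ 2) :=
        mul_le_mul_of_nonneg_left (erfc_le_exp_neg_sq hz) (exp_pos _).le
    _ = exp (d ^ 2) * exp (-(z + -d) ^ 2) := by rw [← exp_add, ← exp_add]; ring_nf

theorem integrableOn_exp_mul_erfc_Ioi (d : ℝ) {m : ℝ} (hm : 0 ≤ m) :
    IntegrableOn (fun z => exp (2 * d * z) * erfc z) (Ioi m) := by
  have hbound : IntegrableOn (fun z => exp (d ^ 2) * exp (-(z + -d) ^ 2)) (Ioi m) :=
    integrableOn_Ioi_comp_add_right (f := fun v => exp (d ^ 2) * exp (-v ^ 2)) (-d)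
      (integrable_exp_neg_sq.const_mul _).integrableOn
  have hcont : Continuous fun z => exp (2 * d * z) * erfc z := by fun_prop
  refine hbound.mono' hcont.aestronglyMeasurable
    ((ae_restrict_iff' measurableSet_Ioi).2 (Eventually.of_forall fun z hz => ?_))
  rw [norm_of_nonneg (mul_nonneg (exp_pos _).le (erfc_nonneg _))]
  exact exp_mul_erfc_le d (hm.trans (mem_Ioi.1 hz).le)

theorem tendsto_exp_mul_erfc_atTop (d : ℝ) :
    Tendsto (fun z => exp (2 * d * z) * erfc z) atTop (𝓝 0) := by
  have hsq : Tendsto (fun z : ℝ => (z + -d) ^ 2) atTop atTop :=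
    (tendsto_pow_atTop two_ne_zero).comp (tendsto_atTop_add_const_right _ _ tendsto_id)
  have hbound : Tendsto (fun z => exp (d ^ 2) * exp (-(z + -d) ^ 2)) atTop (𝓝 0) := by
    simpa using
      (tendsto_exp_atBot.comp (tendsto_neg_atTop_atBot.comp hsq)).const_mul (exp (d ^ 2))
  refine tendsto_of_tendsto_of_tendsto_of_le_of_le' tendsto_const_nhds hbound
    (Eventually.of_forall fun z => mul_nonneg (exp_pos _).le (erfc_nonneg _)) ?_
  filter_upwards [eventually_ge_atTop 0] with z hz using exp_mul_erfc_le d hz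

theorem tendsto_erfc_atTop : Tendsto erfc atTop (𝓝 0) := by
  simpa using tendsto_exp_mul_erfc_atTop 0

theorem tendsto_mul_erfc_atTop : Tendsto (fun z => z * erfc z) atTop (𝓝 0) := by
  refine tendsto_of_tendsto_of_tendsto_of_le_of_le' tendsto_const_nhds
    (tendsto_exp_mul_erfc_atTop (1 / 2)) ?_ ?_
  all_goals filter_upwards [eventually_ge_atTop 0] with z hz
  · exact mul_nonneg hz (erfc_nonneg z)
  · refine mul_le_mul_of_nonneg_right ?_ (erfc_nonneg z)
    linarith [add_one_le_exp (2 * (1 / 2) * z)]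

theorem integral_exp_mul_erfc_Ioi {d : ℝ} (hd : d ≠ 0) {m : ℝ} (hm : 0 ≤ m) :
    ∫ z in Ioi m, exp (2 * d * z) * erfc z
      = (2 * d)⁻¹ * (exp (d ^ 2) * erfc (m - d) - exp (2 * d * m) * erfc m) := by
  set F : ℝ → ℝ :=
    fun z => (2 * d)⁻¹ * (exp (2 * d * z) * erfc z - exp (d ^ 2) * erfc (z - d))
  have hF : ∀ z ∈ Ici m, HasDerivAt F (exp (2 * d * z) * erfc z) z := by
    intro z _
    have hexp : HasDerivAt (fun z => exp (2 * d * z)) (exp (2 * d * z) * (2 * d)) z := by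
      simpa using ((hasDerivAt_id z).const_mul (2 * d)).exp
    have hshift : HasDerivAt (fun z => erfc (z - d)) (-(2 / √π * exp (-(z - d) ^ 2))) z := by
      simpa using (hasDerivAt_erfc (z - d)).comp_sub_const z d
    refine (((hexp.mul (hasDerivAt_erfc z)).sub (hshift.const_mul (exp (d ^ 2)))).const_mul
      (2 * d)⁻¹).congr_deriv ?_
    -- the two Gaussian terms cancel: `d ^ 2 - (z - d) ^ 2 = 2 d z - z ^ 2`
    have hgauss : exp (d ^ 2) * exp (-(z - d) ^ 2) = exp (2 * d * z) * exp (-z ^ 2) := by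
      rw [← exp_add, ← exp_add]; ring_nf
    field_simp
    linear_combination hgauss
  have hFlim : Tendsto F atTop (𝓝 0) := by
    have hshift : Tendsto (fun z => erfc (z - d)) atTop (𝓝 0) :=
      tendsto_erfc_atTop.comp (tendsto_atTop_add_const_right _ _ tendsto_id)
    simpa only [mul_zero, sub_zero] using
      ((tendsto_exp_mul_erfc_atTop d).sub (hshift.const_mul (exp (d ^ 2)))).const_mul (2 * d)⁻¹
  rw [integral_Ioi_of_hasDerivAt_of_tendsto' hF (integrableOn_exp_mul_erfc_Ioi d hm) hFlim]
  ring

theorem integrableOn_erfc_Ioi_zero : IntegrableOn erfc (Ioi 0) := by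
  simpa using integrableOn_exp_mul_erfc_Ioi 0 le_rfl

theorem integral_erfc_Ioi_zero : ∫ z in Ioi (0 : ℝ), erfc z = 1 / √π := by
  set F : ℝ → ℝ := fun z => z * erfc z - exp (-z ^ 2) / √π
  have hF : ∀ z ∈ Ici (0 : ℝ), HasDerivAt F (erfc z) z := by
    intro z _
    have hgauss : HasDerivAt (fun z : ℝ => exp (-z ^ 2)) (exp (-z ^ 2) * -(2 * z)) z := by
      simpa using ((hasDerivAt_pow 2 z).neg).exp
    refine (((hasDerivAt_id' z).mul (hasDerivAt_erfc z)).sub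
      (hgauss.div_const √π)).congr_deriv ?_
    field_simp
    ring
  have hFlim : Tendsto F atTop (𝓝 0) := by
    have hgauss : Tendsto (fun z : ℝ => exp (-z ^ 2)) atTop (𝓝 0) :=
      tendsto_exp_atBot.comp (tendsto_neg_atTop_atBot.comp (tendsto_pow_atTop two_ne_zero))
    simpa using tendsto_mul_erfc_atTop.sub (hgauss.div_const √π)
  rw [integral_Ioi_of_hasDerivAt_of_tendsto' hF integrableOn_erfc_Ioi_zero hFlim]
  simp [F]

/-- The remainder of the first-order Taylor expansion `1 - 2x/√π` at `0` of the scaled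
complementary error function `e^{x²} erfc x`. -/
noncomputable def erfcxRemainder (x : ℝ) : ℝ :=
  exp (x ^ 2) * erfc x - 1 + 2 * x / √π

theorem hasDerivAt_erfcxRemainder (x : ℝ) :
    HasDerivAt erfcxRemainder (2 * x * exp (x ^ 2) * erfc x) x := by
  have hexp : HasDerivAt (fun x => exp (x ^ 2)) (exp (x ^ 2) * (2 * x)) x := by
    simpa using (hasDerivAt_pow 2 x).exp
  refine ((((hexp.mul (hasDerivAt_erfc x)).sub_const 1).add
    (((hasDerivAt_id' x).const_mul 2).div_const √π))).congr_deriv ?_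
  have hgauss : exp (x ^ 2) * exp (-x ^ 2) = 1 := by rw [← exp_add]; simp
  field_simp
  linear_combination -hgauss

theorem tendsto_erfcxRemainder_div_sq :
    Tendsto (fun x => erfcxRemainder x / x ^ 2) (𝓝[>] 0) (𝓝 1) := by
  have hcont : Continuous erfcxRemainder := by unfold erfcxRemainder; fun_prop
  have hR : Tendsto erfcxRemainder (𝓝[>] 0) (𝓝 0) := by
    simpa [erfcxRemainder] using (hcont.tendsto 0).mono_left nhdsWithin_le_nhds
  have hsq : Tendsto (fun x : ℝ => x ^ 2) (𝓝[>] 0) (𝓝 0) := by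
    simpa using ((continuous_pow 2).tendsto (0 : ℝ)).mono_left nhdsWithin_le_nhds
  have hratio : Tendsto (fun x => 2 * x * exp (x ^ 2) * erfc x / (2 * x)) (𝓝[>] 0) (𝓝 1) := by
    have hlim : Tendsto (fun x => exp (x ^ 2) * erfc x) (𝓝[>] 0) (𝓝 1) := by
      simpa using ((by fun_prop : Continuous fun x => exp (x ^ 2) * erfc x).tendsto 0).mono_left
        nhdsWithin_le_nhds
    refine hlim.congr' ?_
    filter_upwards [self_mem_nhdsWithin] with x (hx : 0 < x)
    field_simp
  refine HasDerivAt.lhopital_zero_nhdsGT (Eventually.of_forall hasDerivAt_erfcxRemainder)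
    (Eventually.of_forall fun x => by simpa using hasDerivAt_pow 2 x) ?_ hR hsq hratio
  filter_upwards [self_mem_nhdsWithin] with x (hx : 0 < x) using by positivity

theorem integral_Ioi_integral_Ioi_exp_mul_erfc {d : ℝ} (hd : 0 < d) :
    ∫ m in Ioi d, ∫ z in Ioi m, exp (2 * d * z) * erfc z
      = exp (d ^ 2) * erfcxRemainder d / (4 * d ^ 2) := by
  have hshift : IntegrableOn (fun m => erfc (m - d)) (Ioi d) := by
    simpa only [← sub_eq_add_neg] using
      integrableOn_Ioi_comp_add_right (-d) (by simpa using integrableOn_erfc_Ioi_zero)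
  have hshift_int : ∫ m in Ioi d, erfc (m - d) = 1 / √π := by
    simp_rw [sub_eq_add_neg]
    rw [integral_comp_add_right_Ioi, add_neg_cancel, integral_erfc_Ioi_zero]
  rw [setIntegral_congr_fun measurableSet_Ioi fun m (hm : d < m) =>
      integral_exp_mul_erfc_Ioi hd.ne' (hd.le.trans hm.le),
    integral_const_mul, integral_sub (hshift.const_mul _) (integrableOn_exp_mul_erfc_Ioi d hd.le),
    integral_const_mul, hshift_int, integral_exp_mul_erfc_Ioi hd.ne' hd.le, sub_self, erfc_zero,
    erfcxRemainder, show 2 * d * d = d ^ 2 + d ^ 2 by ring, exp_add]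
  field_simp
  ring

noncomputable def greenCrossing (Dp Dm lam α s s₁ t : ℝ) : ℝ :=
  lam / √(Dm * Dp) * exp (lam * α / √Dm * (-s + s₁ * √(Dm / Dp)) + lam ^ 2 * α ^ 2 * t) *
    erfc ((-s + s₁ * √(Dm / Dp)) / (2 * √(Dm * t)) + lam * α * √t)

theorem integral_Iio_integral_Ioi_greenCrossing {Dp Dm lam α t : ℝ} (hDp : 0 < Dp)
    (hDm : 0 < Dm) (hκ : 0 < lam * α) (ht : 0 < t) :
    ∫ s in Iio 0, ∫ s₁ in Ioi 0, greenCrossing Dp Dm lam α s s₁ t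
      = erfcxRemainder (lam * α * √t) / (lam * α ^ 2) := by
  set d := lam * α * √t with hd
  set b := 2 * √(Dm * t) with hb
  set c := √(Dm / Dp) with hc
  set h : ℝ → ℝ := fun z => lam / √(Dm * Dp) * exp (-d ^ 2) * (exp (2 * d * z) * erfc z) with hh
  have hG : ∀ s s₁, greenCrossing Dp Dm lam α s s₁ t = h ((-s + s₁ * c) / b + d) := by
    intro s s₁
    have hexp : lam * α / √Dm * (-s + s₁ * c) + lam ^ 2 * α ^ 2 * t
        = -d ^ 2 + 2 * d * ((-s + s₁ * c) / b + d) := by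
      rw [hd, hb, sqrt_mul hDm.le]
      field_simp
      rw [sq_sqrt ht.le]
      ring
    rw [hh, greenCrossing, hexp, exp_add]
    ring
  simp_rw [hG]
  rw [integral_Iio_integral_Ioi_comp_div_add h (by positivity) (by positivity) d]
  simp only [hh, integral_const_mul, smul_eq_mul]
  rw [integral_Ioi_integral_Ioi_exp_mul_erfc (by positivity), exp_neg, hb, hc, hd,
    sqrt_mul hDm.le, sqrt_mul hDm.le, sqrt_div hDm.le]
  field_simp
  ring

/-- The total heat transmitted through a flat interface of finite resistance `λ` is linear
in `t` to leading order: `lim_{t→0⁺} (1/t) ∫_{s<0} ∫_{s₁>0} G₋₊(s,s₁,t) ds₁ ds = λ`. -/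
theorem transmitted_heat_finite_lambda_linear_law
    (Dp Dm lam α : ℝ) (hDp : 0 < Dp) (hDm : 0 < Dm) (hlam : 0 < lam)
    (hα : α = 1 / Real.sqrt Dm + 1 / Real.sqrt Dp)
    (Erfc : ℝ → ℝ)
    (hErfc : ∀ x, Erfc x = (2 / Real.sqrt Real.pi) * ∫ u in Set.Ioi x, Real.exp (-u ^ 2))
    (Gmp : ℝ → ℝ → ℝ → ℝ)
    (hGmp : ∀ s s₁ t, Gmp s s₁ t = (lam / Real.sqrt (Dm * Dp)) *
        Real.exp ((lam * α / Real.sqrt Dm) * (-s + s₁ * Real.sqrt (Dm / Dp)) +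
          lam ^ 2 * α ^ 2 * t) *
          Erfc ((-s + s₁ * Real.sqrt (Dm / Dp)) / (2 * Real.sqrt (Dm * t)) +
            lam * α * Real.sqrt t)) :
    Tendsto (fun t : ℝ =>
        (1 / t) * ∫ s in Set.Iio (0 : ℝ), ∫ s₁ in Set.Ioi (0 : ℝ), Gmp s s₁ t)
      (nhdsWithin 0 (Set.Ioi 0)) (nhds lam) := by
  have hG : Gmp = greenCrossing Dp Dm lam α := by
    obtain rfl : Erfc = erfc := funext hErfc
    funext s s₁ t
    exact hGmp s s₁ t
  subst hG
  have hκ : 0 < lam * α := mul_pos hlam (by rw [hα]; positivity)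
  have hd : Tendsto (fun t => lam * α * √t) (𝓝[>] 0) (𝓝[>] 0) := by
    refine tendsto_nhdsWithin_iff.2 ⟨?_, ?_⟩
    · exact ((by fun_prop : Continuous fun t => lam * α * √t).tendsto' 0 0 (by simp)).mono_left
        nhdsWithin_le_nhds
    · filter_upwards [self_mem_nhdsWithin] with t (ht : 0 < t) using mul_pos hκ (sqrt_pos.2 ht)
  have hlim : Tendsto (fun t => lam * (erfcxRemainder (lam * α * √t) / (lam * α * √t) ^ 2))
      (𝓝[>] 0) (𝓝 lam) := by
    simpa using (tendsto_erfcxRemainder_div_sq.comp hd).const_mul lam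
  refine hlim.congr' ?_
  filter_upwards [self_mem_nhdsWithin] with t (ht : 0 < t)
  rw [integral_Iio_integral_Ioi_greenCrossing hDp hDm hκ ht, mul_pow, sq_sqrt ht.le]
  field_simp
end
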